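/- arXiv:1408.2172 — 5 statements merged into one kernel-verified Lean document; each statement's English description precedes it below -/
import Mathlib

section
/- For a finite connected graph G and any vertex r, the chromatic number of G is at most twice the maximum over all ℓ ≥ 0 of the chromatic number of the subgraph induced by N_ℓ(r), the set of vertices at distance exactly ℓ from r. -/
/-- For a finite connected graph and any root `r`, the chromatic number is at
most twice the maximum over all levels `ℓ` of the chromatic number of the
subgraph induced by the set of vertices at distance exactly `ℓ` from `r`. -/
theorem chromatic_le_two_mul_sup_levels {V : Type*} [Fintype V]
    (G : SimpleGraph V) (hconn : G.Connected) (r : V) :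
    G.chromaticNumber ≤
      2 * ⨆ ℓ : ℕ, (G.induce {v : V | G.dist r v = ℓ}).chromaticNumber := by
  classical
  set S := ⨆ ℓ : ℕ, (G.induce {v : V | G.dist r v = ℓ}).chromaticNumber with hS
  have hSle : S ≤ (Fintype.card V : ℕ∞) := by
    apply iSup_le
    intro ℓ
    rw [SimpleGraph.chromaticNumber_le_iff_colorable]
    exact ((G.induce {v : V | G.dist r v = ℓ}).colorable_of_fintype).mono
      (Fintype.card_le_of_injective _ Subtype.val_injective)
  have hStop : S ≠ ⊤ := ne_top_of_le_ne_top (by simp) hSle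
  obtain ⟨n, hn⟩ := WithTop.ne_top_iff_exists.mp hStop
  have hlev : ∀ ℓ : ℕ, (G.induce {v : V | G.dist r v = ℓ}).Colorable n := by
    intro ℓ
    rw [← SimpleGraph.chromaticNumber_le_iff_colorable]
    have := le_iSup (fun ℓ : ℕ => (G.induce {v : V | G.dist r v = ℓ}).chromaticNumber) ℓ
    rw [← hS, ← hn] at this
    exact_mod_cast this
  let col : ∀ ℓ : ℕ, (G.induce {v : V | G.dist r v = ℓ}).Coloring (Fin n) :=
    fun ℓ => (hlev ℓ).some
  -- key generalized validity
  have main : ∀ (a b : ℕ) (v w : V) (hv : G.dist r v = a) (hw : G.dist r w = b),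
      G.Adj v w →
      ((⟨a % 2, Nat.mod_lt _ two_pos⟩, col a ⟨v, hv⟩) : Fin 2 × Fin n) ≠
      (⟨b % 2, Nat.mod_lt _ two_pos⟩, col b ⟨w, hw⟩) := by
    intro a b v w hv hw hadj
    by_cases hab : a = b
    · subst hab
      intro hcontra
      have h2 := congrArg Prod.snd hcontra
      exact (col a).valid (by simpa using hadj) h2
    · -- distances differ by at most one, so parity differs
      have h1 : G.dist r v ≤ G.dist r w + 1 := by
        have := hconn.dist_triangle (u := r) (v := w) (w := v)
        rwa [SimpleGraph.dist_eq_one_iff_adj.mpr hadj.symm] at this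
      have h2 : G.dist r w ≤ G.dist r v + 1 := by
        have := hconn.dist_triangle (u := r) (v := v) (w := w)
        rwa [SimpleGraph.dist_eq_one_iff_adj.mpr hadj] at this
      rw [hv, hw] at h1 h2
      intro hcontra
      have h3 := congrArg Prod.fst hcontra
      have h4 : a % 2 = b % 2 := congrArg Fin.val h3
      omega
  let c : V → Fin 2 × Fin n := fun v =>
    (⟨G.dist r v % 2, Nat.mod_lt _ two_pos⟩, col (G.dist r v) ⟨v, rfl⟩)
  have hcol : G.Colorable (2 * n) := by
    have : Fintype.card (Fin 2 × Fin n) = 2 * n := by simp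
    exact this ▸ (SimpleGraph.Coloring.mk c
      (fun {v w} h => main _ _ v w rfl rfl h)).colorable
  have hle : G.chromaticNumber ≤ ((2 * n : ℕ) : ℕ∞) :=
    SimpleGraph.chromaticNumber_le_iff_colorable.mpr hcol
  calc G.chromaticNumber ≤ ((2 * n : ℕ) : ℕ∞) := hle
    _ = 2 * S := by rw [← hn]; norm_cast
end

section
/- In a connected graph, if x and y are distinct vertices at the same distance ℓ ≥ 1 from a vertex r, then there exists an induced x–y path all of whose internal vertices are at distance strictly less than ℓ from r. -/
/-!
Let `S` consist of `x`, `y` and the vertices at distance `< ℓ` from `r`. Every vertex of a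
geodesic from `r` to `x` other than `x` lies closer to `r`, so `x` and `y` are connected in
the induced graph `G[S]`. A geodesic of `G[S]` from `x` to `y` is an induced path, since the
distance between two of its vertices is their index difference, and its inner vertices,
being neither `x` nor `y`, are at distance `< ℓ` from `r`.
-/

open SimpleGraph

namespace SimpleGraph.Walk

variable {V : Type*} {G : SimpleGraph V} {u v : V}

theorem dist_getVert_getVert_of_length_eq_dist {p : G.Walk u v} (hp : p.length = G.dist u v)
    {i j : ℕ} (hij : i ≤ j) (hj : j ≤ p.length) :
    G.dist (p.getVert i) (p.getVert j) = j - i := by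
  have hsub : ((p.drop i).take (j - i)).IsSubwalk p :=
    ((p.drop i).isSubwalk_take _).trans (p.isSubwalk_drop i)
  have hdist := length_eq_dist_of_subwalk hp hsub
  rw [take_length, drop_length, drop_getVert, Nat.add_sub_cancel' hij] at hdist
  rw [← hdist]
  omega

theorem adj_getVert_iff_of_length_eq_dist {p : G.Walk u v} (hp : p.length = G.dist u v)
    {i j : ℕ} (hi : i ≤ p.length) (hj : j ≤ p.length) :
    G.Adj (p.getVert i) (p.getVert j) ↔ i + 1 = j ∨ j + 1 = i := by
  rw [← dist_eq_one_iff_adj]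
  rcases le_total i j with hij | hji
  · rw [dist_getVert_getVert_of_length_eq_dist hp hij hj]
    omega
  · rw [dist_comm, dist_getVert_getVert_of_length_eq_dist hp hji hi]
    omega

theorem IsPath.injective_getVert_fin {p : G.Walk u v} (hp : p.IsPath) :
    Function.Injective fun i : Fin (p.length + 1) ↦ p.getVert i :=
  fun i j hij ↦ Fin.ext <| hp.getVert_injOn (Nat.le_of_lt_succ i.2) (Nat.le_of_lt_succ j.2) hij

theorem dist_lt_of_mem_support_of_length_eq_dist {p : G.Walk u v} (hp : p.length = G.dist u v)
    {w : V} (hw : w ∈ p.support) (hwv : w ≠ v) : G.dist u w < G.dist u v := by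
  obtain ⟨k, rfl, hk⟩ := mem_support_iff_exists_getVert.mp hw
  have hkv : k ≠ p.length := by
    rintro rfl
    exact hwv p.getVert_length
  have := dist_getVert_getVert_of_length_eq_dist hp (Nat.zero_le k) hk
  rw [getVert_zero] at this
  omega

end SimpleGraph.Walk

theorem up_path_exists_general {V : Type*} (G : SimpleGraph V) (hconn : G.Connected)
    (r x y : V) (ℓ : ℕ)
    (hx : G.dist r x = ℓ) (hy : G.dist r y = ℓ) :
    ∃ n : ℕ, ∃ f : Fin (n + 1) → V,
      f 0 = x ∧ f (Fin.last n) = y ∧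
      Function.Injective f ∧
      (∀ i j : Fin (n + 1), G.Adj (f i) (f j) ↔ ((i : ℕ) + 1 = j ∨ (j : ℕ) + 1 = i)) ∧
      ∀ i : Fin (n + 1), i ≠ 0 → i ≠ Fin.last n → G.dist r (f i) < ℓ := by
  let S : Set V := {v | G.dist r v < ℓ ∨ v = x ∨ v = y}
  obtain ⟨wx, hwx⟩ := hconn.exists_walk_length_eq_dist r x
  obtain ⟨wy, hwy⟩ := hconn.exists_walk_length_eq_dist r y
  have hS : ∀ v ∈ (wx.reverse.append wy).support, v ∈ S := by
    intro v hv
    rw [Walk.mem_support_append_iff, Walk.support_reverse, List.mem_reverse] at hv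
    by_cases hvx : v = x; · exact Or.inr (Or.inl hvx)
    by_cases hvy : v = y; · exact Or.inr (Or.inr hvy)
    refine Or.inl ?_
    rcases hv with hv | hv
    · exact hx ▸ Walk.dist_lt_of_mem_support_of_length_eq_dist hwx hv hvx
    · exact hy ▸ Walk.dist_lt_of_mem_support_of_length_eq_dist hwy hv hvy
  obtain ⟨p, hp⟩ := (Walk.induce S _ hS).reachable.exists_walk_length_eq_dist
  have hinj : Function.Injective fun i : Fin (p.length + 1) ↦ (p.getVert i : V) :=
    Subtype.val_injective.comp (p.isPath_of_length_eq_dist hp).injective_getVert_fin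
  refine ⟨p.length, fun i ↦ p.getVert i, by simp, by simp, hinj, fun i j ↦
    Walk.adj_getVert_iff_of_length_eq_dist hp (Nat.le_of_lt_succ i.2) (Nat.le_of_lt_succ j.2),
    fun i hi0 hil ↦ ?_⟩
  rcases (p.getVert i).2 with h | h | h
  · exact h
  · exact absurd (hinj (a₁ := i) (a₂ := 0) (by simpa using h)) hi0
  · exact absurd (hinj (a₁ := i) (a₂ := Fin.last _) (by simpa using h)) hil

/-- In a connected graph, two distinct vertices at equal distance `ℓ ≥ 1` from
`r` are joined by an induced path whose internal vertices are all at distance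
strictly less than `ℓ` from `r`. -/
theorem up_path_exists {V : Type*} (G : SimpleGraph V) (hconn : G.Connected)
    (r x y : V) (ℓ : ℕ) (hℓ : 1 ≤ ℓ) (hxy : x ≠ y)
    (hx : G.dist r x = ℓ) (hy : G.dist r y = ℓ) :
    ∃ n : ℕ, ∃ f : Fin (n + 1) → V,
      f 0 = x ∧ f (Fin.last n) = y ∧
      Function.Injective f ∧
      (∀ i j : Fin (n + 1), G.Adj (f i) (f j) ↔ ((i : ℕ) + 1 = j ∨ (j : ℕ) + 1 = i)) ∧
      ∀ i : Fin (n + 1), i ≠ 0 → i ≠ Fin.last n → G.dist r (f i) < ℓ :=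
  up_path_exists_general G hconn r x y ℓ hx hy
end

section
/- In a trinity graph, let x and y be nonadjacent vertices and P1, P2, P3 be three induced x–y paths that are pairwise independent (pairwise disjoint internal vertex sets and no edges between internal vertices of different paths). Then at most one of the three paths has length divisible by 3, and the other two have lengths congruent to each other modulo 3. -/
/-- `G` has an induced cycle of length `n`. -/
def HasInducedCycle {V : Type*} (G : SimpleGraph V) (n : ℕ) : Prop :=
  ∃ f : ZMod n → V, Function.Injective f ∧
    ∀ i j : ZMod n, G.Adj (f i) (f j) ↔ (i = j + 1 ∨ j = i + 1)

/-- A trinity graph: no induced cycle of length divisible by 3. -/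
def TrinityGraph {V : Type*} (G : SimpleGraph V) : Prop :=
  ∀ n : ℕ, 3 ≤ n → 3 ∣ n → ¬ HasInducedCycle G n

/-- `f : Fin (n+1) → V` is an induced path in `G`. -/
def IsInducedPath {V : Type*} (G : SimpleGraph V) {n : ℕ} (f : Fin (n + 1) → V) : Prop :=
  Function.Injective f ∧
    ∀ i j : Fin (n + 1), G.Adj (f i) (f j) ↔ ((i : ℕ) + 1 = j ∨ (j : ℕ) + 1 = i)

lemma two_paths_not_dvd {V : Type*} (G : SimpleGraph V)
    (hG : TrinityGraph G) (x y : V) (hxy : x ≠ y) (hnadj : ¬ G.Adj x y)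
    (a b : ℕ) (p : Fin (a + 1) → V) (q : Fin (b + 1) → V)
    (hp : IsInducedPath G p) (hq : IsInducedPath G q)
    (hp0 : p 0 = x) (hpl : p (Fin.last a) = y)
    (hq0 : q 0 = x) (hql : q (Fin.last b) = y)
    (hd : ∀ (i : Fin (a+1)) (j : Fin (b+1)), i ≠ 0 → i ≠ Fin.last a → j ≠ 0 → j ≠ Fin.last b → p i ≠ q j)
    (hi : ∀ (i : Fin (a+1)) (j : Fin (b+1)), i ≠ 0 → i ≠ Fin.last a → j ≠ 0 → j ≠ Fin.last b → ¬ G.Adj (p i) (q j)) :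
    ¬ 3 ∣ (a + b) := by
  have ha2 : 2 ≤ a := by
    by_contra h
    push_neg at h
    interval_cases a
    · exact hxy (hp0 ▸ hpl ▸ rfl)
    · apply hnadj
      have := (hp.2 0 (Fin.last 1)).mpr (Or.inl (by simp))
      rwa [hp0, hpl] at this
  have hb2 : 2 ≤ b := by
    by_contra h
    push_neg at h
    interval_cases b
    · exact hxy (hq0 ▸ hql ▸ rfl)
    · apply hnadj
      have := (hq.2 0 (Fin.last 1)).mpr (Or.inl (by simp))
      rwa [hq0, hql] at this
  set m := a + b with hm
  have hm4 : 4 ≤ m := by omega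
  haveI : NeZero m := ⟨by omega⟩
  haveI : Fact (1 < m) := ⟨by omega⟩
  intro hdvd
  apply hG m (by omega) hdvd
  refine ⟨fun i => if h : i.val ≤ a then p ⟨i.val, by omega⟩
    else q ⟨m - i.val, by have := ZMod.val_lt i; omega⟩, ?_, ?_⟩
  · -- injectivity
    intro i j hgij
    have hvi := ZMod.val_lt i
    have hvj := ZMod.val_lt j
    apply ZMod.val_injective m
    simp only at hgij
    -- the key mixed-case fact
    have mixed : ∀ (v w : ℕ) (hv : v < a + 1) (hw : a < w) (hw' : w < m),
        p ⟨v, hv⟩ ≠ q ⟨m - w, by omega⟩ := by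
      intro v w hv hw hw' heq
      rcases Nat.eq_zero_or_pos v with h0' | h0'
      · rw [show (⟨v, hv⟩ : Fin (a+1)) = 0 by simp [Fin.ext_iff, h0']] at heq
        rw [hp0, ← hq0] at heq
        have := congrArg Fin.val (hq.1 heq)
        simp at this
        omega
      · rcases eq_or_ne v a with ha' | ha'
        · rw [show (⟨v, hv⟩ : Fin (a+1)) = Fin.last a by simp [Fin.ext_iff, Fin.last, ha']] at heq
          rw [hpl, ← hql] at heq
          have := congrArg Fin.val (hq.1 heq)
          simp [Fin.last] at this
          omega
        · exact hd _ _ (by simp [Fin.ext_iff]; omega) (by simp [Fin.ext_iff, Fin.last]; omega)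
            (by simp [Fin.ext_iff]; omega) (by simp [Fin.ext_iff, Fin.last]; omega) heq
    by_cases h1 : i.val ≤ a <;> by_cases h2 : j.val ≤ a
    · rw [dif_pos h1, dif_pos h2] at hgij
      exact congrArg Fin.val (hp.1 hgij)
    · rw [dif_pos h1, dif_neg h2] at hgij
      exact absurd hgij (mixed _ _ (by omega) (by omega) hvj)
    · rw [dif_neg h1, dif_pos h2] at hgij
      exact absurd hgij.symm (mixed _ _ (by omega) (by omega) hvi)
    · rw [dif_neg h1, dif_neg h2] at hgij
      have := congrArg Fin.val (hq.1 hgij)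
      simp at this
      omega
  · -- adjacency
    have key : ∀ i j : ZMod m, i = j + 1 ↔ (i.val = j.val + 1 ∨ (j.val + 1 = m ∧ i.val = 0)) := by
      intro i j
      have hvi := ZMod.val_lt i
      have hvj := ZMod.val_lt j
      have h1 : i = j + 1 ↔ i.val = (j.val + 1) % m := by
        constructor
        · rintro rfl; rw [ZMod.val_add, ZMod.val_one]
        · intro h; apply ZMod.val_injective m; rw [ZMod.val_add, ZMod.val_one]; exact h
      rw [h1]
      rcases eq_or_ne (j.val + 1) m with h | h
      · rw [h, Nat.mod_self]; omega
      · rw [Nat.mod_eq_of_lt (by omega)]; omega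
    -- mixed-case adjacency characterization
    have mixedA : ∀ (v w : ℕ) (hv : v < a + 1) (hw : a < w) (hw' : w < m),
        G.Adj (p ⟨v, hv⟩) (q ⟨m - w, by omega⟩) ↔
          ((v = 0 ∧ w + 1 = m) ∨ (v = a ∧ w = a + 1)) := by
      intro v w hv hw hw'
      rcases Nat.eq_zero_or_pos v with h0' | h0'
      · rw [show (⟨v, hv⟩ : Fin (a+1)) = 0 by simp [Fin.ext_iff, h0'], hp0, ← hq0, hq.2]
        simp only [Fin.val_zero]
        omega
      · rcases eq_or_ne v a with ha' | ha'
        · rw [show (⟨v, hv⟩ : Fin (a+1)) = Fin.last a by simp [Fin.ext_iff, Fin.last, ha'],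
            hpl, ← hql, hq.2]
          simp only [Fin.val_last]
          omega
        · constructor
          · intro h
            exact absurd h (hi _ _ (by simp [Fin.ext_iff]; omega) (by simp [Fin.ext_iff, Fin.last]; omega)
              (by simp [Fin.ext_iff]; omega) (by simp [Fin.ext_iff, Fin.last]; omega))
          · intro h; exfalso; omega
    intro i j
    have hvi := ZMod.val_lt i
    have hvj := ZMod.val_lt j
    rw [key i j, key j i]
    simp only
    by_cases h1 : i.val ≤ a <;> by_cases h2 : j.val ≤ a
    · rw [dif_pos h1, dif_pos h2, hp.2]
      simp only
      omega
    · rw [dif_pos h1, dif_neg h2, mixedA _ _ (by omega) (by omega) hvj]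
      omega
    · rw [dif_neg h1, dif_pos h2, G.adj_comm, mixedA _ _ (by omega) (by omega) hvi]
      omega
    · rw [dif_neg h1, dif_neg h2, hq.2]
      simp only
      omega

/-- In a trinity graph, among three pairwise independent induced paths between
nonadjacent `x` and `y`, at most one has length divisible by 3, and the
lengths of those not divisible by 3 are congruent to each other mod 3. -/
theorem three_independent_paths_type {V : Type*} (G : SimpleGraph V)
    (hG : TrinityGraph G) (x y : V) (hxy : x ≠ y) (hnadj : ¬ G.Adj x y)
    (n : Fin 3 → ℕ) (f : ∀ k : Fin 3, Fin (n k + 1) → V)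
    (hpath : ∀ k, IsInducedPath G (f k))
    (h0 : ∀ k, f k 0 = x) (h1 : ∀ k, f k (Fin.last (n k)) = y)
    (hdisj : ∀ k l : Fin 3, k ≠ l →
      ∀ i : Fin (n k + 1), ∀ j : Fin (n l + 1),
        i ≠ 0 → i ≠ Fin.last (n k) → j ≠ 0 → j ≠ Fin.last (n l) → f k i ≠ f l j)
    (hindep : ∀ k l : Fin 3, k ≠ l →
      ∀ i : Fin (n k + 1), ∀ j : Fin (n l + 1),
        i ≠ 0 → i ≠ Fin.last (n k) → j ≠ 0 → j ≠ Fin.last (n l) →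
          ¬ G.Adj (f k i) (f l j)) :
    (∀ k l : Fin 3, k ≠ l → 3 ∣ n k → ¬ 3 ∣ n l) ∧
    (∀ k l : Fin 3, k ≠ l → ¬ 3 ∣ n k → ¬ 3 ∣ n l → n k % 3 = n l % 3) := by
  have hpair : ∀ k l : Fin 3, k ≠ l → ¬ 3 ∣ (n k + n l) := fun k l hkl =>
    two_paths_not_dvd G hG x y hxy hnadj (n k) (n l) (f k) (f l) (hpath k) (hpath l)
      (h0 k) (h1 k) (h0 l) (h1 l) (hdisj k l hkl) (hindep k l hkl)
  constructor
  · intro k l hkl hk hl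
    exact hpair k l hkl (Nat.dvd_add hk hl)
  · intro k l hkl hk hl
    have := hpair k l hkl
    omega
end

section
/- Let G be a triangle-free graph with no induced 6-cycle, let v1 ... v7 be an induced path, and let S be a stable set, disjoint from the path, that dominates {v1,...,v7}. Then there exists an index i with 1 ≤ i ≤ 5 and vertices s, s' in S such that s is adjacent to v_i but not to v_{i+2}, and s' is adjacent to v_{i+2} but not to v_i. -/
theorem c2_aux {V : Type*} (G : SimpleGraph V)
    (htf : ∀ a b c : V, G.Adj a b → G.Adj b c → ¬ G.Adj a c)
    (hC6 : ¬ ∃ f : ZMod 6 → V, Function.Injective f ∧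
      ∀ i j : ZMod 6, G.Adj (f i) (f j) ↔ (i = j + 1 ∨ j = i + 1))
    (x y z w s s' : V)
    (hxy : G.Adj x y) (hzw : G.Adj z w)
    (nxz : ¬ G.Adj x z) (nxw : ¬ G.Adj x w) (nyz : ¬ G.Adj y z) (nyw : ¬ G.Adj y w)
    (exz : x ≠ z) (exw : x ≠ w) (eyz : y ≠ z) (eyw : y ≠ w)
    (hss' : ¬ G.Adj s s')
    (hsx : G.Adj s x) (hsw : G.Adj s w) (hs'y : G.Adj s' y) (hs'z : G.Adj s' z)
    (dsx : s ≠ x) (dsy : s ≠ y) (dsz : s ≠ z) (dsw : s ≠ w)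
    (d'x : s' ≠ x) (d'y : s' ≠ y) (d'z : s' ≠ z) (d'w : s' ≠ w) :
    False := by
  have nsy : ¬ G.Adj s y := htf s x y hsx hxy
  have nsz : ¬ G.Adj s z := htf s w z hsw hzw.symm
  have n'x : ¬ G.Adj s' x := htf s' y x hs'y hxy.symm
  have n'w : ¬ G.Adj s' w := htf s' z w hs'z hzw
  have dss' : s ≠ s' := fun h => nsy (h ▸ hs'y)
  have exy : x ≠ y := hxy.ne
  have ezw : z ≠ w := hzw.ne
  set f : ZMod 6 → V := fun i =>
    if i = 0 then s else if i = 1 then x else if i = 2 then y else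
    if i = 3 then s' else if i = 4 then z else w with hf
  have e0 : f 0 = s := rfl
  have e1 : f 1 = x := rfl
  have e2 : f 2 = y := rfl
  have e3 : f 3 = s' := rfl
  have e4 : f 4 = z := rfl
  have e5 : f 5 = w := rfl
  have hcases : ∀ i : ZMod 6, i = 0 ∨ i = 1 ∨ i = 2 ∨ i = 3 ∨ i = 4 ∨ i = 5 := by decide
  apply hC6
  refine ⟨f, ?_, ?_⟩
  · intro i j h
    rcases hcases i with rfl|rfl|rfl|rfl|rfl|rfl <;>
      rcases hcases j with rfl|rfl|rfl|rfl|rfl|rfl <;>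
      simp only [e0, e1, e2, e3, e4, e5] at h <;>
      first
        | rfl
        | exact absurd h (by assumption)
        | exact absurd h.symm (by assumption)
  · intro i j
    rcases hcases i with rfl|rfl|rfl|rfl|rfl|rfl <;>
      rcases hcases j with rfl|rfl|rfl|rfl|rfl|rfl <;>
      simp only [e0, e1, e2, e3, e4, e5] <;>
      first
        | exact iff_of_true (by first | assumption | exact SimpleGraph.Adj.symm (by assumption)) (by decide)
        | exact iff_of_false (by
            first
              | assumption
              | exact fun h => absurd h.symm (by assumption)
              | exact fun h => G.ne_of_adj h rfl) (by decide)

/-- In a triangle-free graph with no induced 6-cycle, a stable set dominating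
an induced 7-vertex path contains, for some `i`, private neighbors for the
pair `v_i, v_{i+2}`. -/
theorem clean_pair_exists {V : Type*} (G : SimpleGraph V)
    (htf : ∀ a b c : V, G.Adj a b → G.Adj b c → ¬ G.Adj a c)
    (hC6 : ¬ ∃ f : ZMod 6 → V, Function.Injective f ∧
      ∀ i j : ZMod 6, G.Adj (f i) (f j) ↔ (i = j + 1 ∨ j = i + 1))
    (v : Fin 7 → V) (hpath : IsInducedPath G v)
    (S : Set V)
    (hstab : ∀ a ∈ S, ∀ b ∈ S, ¬ G.Adj a b)
    (hdisj : ∀ s ∈ S, ∀ i : Fin 7, s ≠ v i)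
    (hdom : ∀ i : Fin 7, ∃ s ∈ S, G.Adj s (v i)) :
    ∃ i : Fin 5, ∃ s ∈ S, ∃ s' ∈ S,
      G.Adj s (v ⟨i.1, by omega⟩) ∧ ¬ G.Adj s (v ⟨i.1 + 2, by omega⟩) ∧
      G.Adj s' (v ⟨i.1 + 2, by omega⟩) ∧ ¬ G.Adj s' (v ⟨i.1, by omega⟩) := by
  by_contra hcon
  obtain ⟨hinj, hadj⟩ := hpath
  have H : ∀ i : Fin 5,
      (∀ s ∈ S, G.Adj s (v ⟨i.1, by omega⟩) → G.Adj s (v ⟨i.1 + 2, by omega⟩)) ∨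
      (∀ s ∈ S, G.Adj s (v ⟨i.1 + 2, by omega⟩) → G.Adj s (v ⟨i.1, by omega⟩)) := by
    intro i
    by_contra h
    push_neg at h
    obtain ⟨⟨s, hs, hs1, hs2⟩, ⟨s', hs', hs'1, hs'2⟩⟩ := h
    exact hcon ⟨i, s, hs, s', hs', hs1, hs2, hs'1, hs'2⟩
  have pe : ∀ (a b : Fin 7), ((a:ℕ)+1 = b ∨ (b:ℕ)+1 = a) → G.Adj (v a) (v b) :=
    fun a b h => (hadj a b).mpr h
  have pn : ∀ (a b : Fin 7), ¬((a:ℕ)+1 = b ∨ (b:ℕ)+1 = a) → ¬ G.Adj (v a) (v b) :=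
    fun a b h hx => h ((hadj a b).mp hx)
  have pv : ∀ (a b : Fin 7), a ≠ b → v a ≠ v b := fun a b h hx => h (hinj hx)
  have key : ∀ a b c d : Fin 7,
      ((a:ℕ)+1 = b ∨ (b:ℕ)+1 = a) →
      ((c:ℕ)+1 = d ∨ (d:ℕ)+1 = c) →
      (a ≠ c ∧ ¬((a:ℕ)+1 = c ∨ (c:ℕ)+1 = a)) →
      (a ≠ d ∧ ¬((a:ℕ)+1 = d ∨ (d:ℕ)+1 = a)) →
      (b ≠ c ∧ ¬((b:ℕ)+1 = c ∨ (c:ℕ)+1 = b)) →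
      (b ≠ d ∧ ¬((b:ℕ)+1 = d ∨ (d:ℕ)+1 = b)) →
      ∀ s ∈ S, ∀ s' ∈ S, G.Adj s (v a) → G.Adj s (v d) →
        G.Adj s' (v b) → G.Adj s' (v c) → False := by
    rintro a b c d hab hcd ⟨eac, nac⟩ ⟨ead, nad⟩ ⟨ebc, nbc⟩ ⟨ebd, nbd⟩ s hs s' hs' h1 h2 h3 h4
    exact c2_aux G htf hC6 (v a) (v b) (v c) (v d) s s'
      (pe a b hab) (pe c d hcd) (pn a c nac) (pn a d nad) (pn b c nbc) (pn b d nbd)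
      (pv a c eac) (pv a d ead) (pv b c ebc) (pv b d ebd)
      (hstab s hs s' hs') h1 h2 h3 h4
      (hdisj s hs a) (hdisj s hs b) (hdisj s hs c) (hdisj s hs d)
      (hdisj s' hs' a) (hdisj s' hs' b) (hdisj s' hs' c) (hdisj s' hs' d)
  obtain ⟨s0, hs0, a0⟩ := hdom ⟨0, by omega⟩
  obtain ⟨s1, hs1, a1⟩ := hdom ⟨1, by omega⟩
  obtain ⟨s2, hs2, a2⟩ := hdom ⟨2, by omega⟩
  obtain ⟨s3, hs3, a3⟩ := hdom ⟨3, by omega⟩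
  obtain ⟨s4, hs4, a4⟩ := hdom ⟨4, by omega⟩
  obtain ⟨s5, hs5, a5⟩ := hdom ⟨5, by omega⟩
  obtain ⟨s6, hs6, a6⟩ := hdom ⟨6, by omega⟩
  have H02 := H ⟨0, by omega⟩
  have H13 := H ⟨1, by omega⟩
  have H24 := H ⟨2, by omega⟩
  have H35 := H ⟨3, by omega⟩
  have H46 := H ⟨4, by omega⟩
  -- forbidden pairs
  have K2415 := key ⟨2, by omega⟩ ⟨1, by omega⟩ ⟨5, by omega⟩ ⟨4, by omega⟩
    (by decide) (by decide) (by decide) (by decide) (by decide) (by decide)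
  have K1304 := key ⟨1, by omega⟩ ⟨0, by omega⟩ ⟨4, by omega⟩ ⟨3, by omega⟩
    (by decide) (by decide) (by decide) (by decide) (by decide) (by decide)
  have K3526 := key ⟨5, by omega⟩ ⟨6, by omega⟩ ⟨2, by omega⟩ ⟨3, by omega⟩
    (by decide) (by decide) (by decide) (by decide) (by decide) (by decide)
  -- no vertex of S is adjacent to both v1 and v5
  have K15 : ∀ q ∈ S, G.Adj q (v ⟨1, by omega⟩) → G.Adj q (v ⟨5, by omega⟩) → False := by
    intro q hq hq1 hq5
    rcases H24 with h | h
    · exact K2415 s2 hs2 q hq a2 (h s2 hs2 a2) hq1 hq5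
    · exact K2415 s4 hs4 q hq (h s4 hs4 a4) a4 hq1 hq5
  rcases H13 with h13 | h13 <;> rcases H35 with h35 | h35
  · -- 1→3 and 3→5
    exact K15 s1 hs1 a1 (h35 s1 hs1 (h13 s1 hs1 a1))
  · -- 1→3 and 5→3 : the hard case
    have b1 : G.Adj s1 (v ⟨3, by omega⟩) := h13 s1 hs1 a1
    have b5 : G.Adj s5 (v ⟨3, by omega⟩) := h35 s5 hs5 a5
    have K04 : ∀ q ∈ S, G.Adj q (v ⟨0, by omega⟩) → G.Adj q (v ⟨4, by omega⟩) → False :=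
      fun q hq hq0 hq4 => K1304 s1 hs1 q hq a1 b1 hq0 hq4
    have K26 : ∀ q ∈ S, G.Adj q (v ⟨2, by omega⟩) → G.Adj q (v ⟨6, by omega⟩) → False :=
      fun q hq hq2 hq6 => K3526 s5 hs5 q hq a5 b5 hq6 hq2
    rcases H24 with h24 | h24
    · rcases H02 with h02 | h02
      · exact K04 s0 hs0 a0 (h24 s0 hs0 (h02 s0 hs0 a0))
      · exact K04 s2 hs2 (h02 s2 hs2 a2) (h24 s2 hs2 a2)
    · rcases H46 with h46 | h46
      · exact K26 s4 hs4 (h24 s4 hs4 a4) (h46 s4 hs4 a4)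
      · exact K26 s6 hs6 (h24 s6 hs6 (h46 s6 hs6 a6)) a6
  · -- 3→1 and 3→5
    exact K15 s3 hs3 (h13 s3 hs3 a3) (h35 s3 hs3 a3)
  · -- 3→1 and 5→3
    exact K15 s5 hs5 (h13 s5 hs5 (h35 s5 hs5 a5)) a5
end

section
/- Let G be a triangle-free graph and let C = v1 v2 v3 v4 v5 be an induced 5-cycle minimally dominated by a stable set S of size 3 disjoint from C. If no vertex of S has exactly one neighbor on C, then (up to rotation) the three vertices of S are adjacent respectively to exactly {v1,v3}, {v2,v4}, and {v2,v5} or to exactly {v3,v5}, {v1,v4}, {v2,v4}. -/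
private lemma zmod5_three {i j k : ZMod 5} (hij : i ≠ j) (hik : i ≠ k) (hjk : j ≠ k) :
    (i = j + 1 ∨ j = i + 1) ∨ (i = k + 1 ∨ k = i + 1) ∨ (j = k + 1 ∨ k = j + 1) := by
  revert i j k; decide

private lemma zmod5_pair {i j : ZMod 5} (h1 : i ≠ j) (h2 : ¬(i = j + 1 ∨ j = i + 1)) :
    j = i + 2 ∨ i = j + 2 := by
  revert i j; decide

private lemma zmod5_cover {a b c : ZMod 5}
    (h : ∀ i : ZMod 5, i = a ∨ i = a + 2 ∨ i = b ∨ i = b + 2 ∨ i = c ∨ i = c + 2) :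
    (b = a + 1 ∧ c = a + 4) ∨ (c = a + 1 ∧ b = a + 4) ∨
    (a = b + 1 ∧ c = b + 4) ∨ (c = b + 1 ∧ a = b + 4) ∨
    (a = c + 1 ∧ b = c + 4) ∨ (b = c + 1 ∧ a = c + 4) := by
  revert a b c; decide

private lemma nbhd_shift {V : Type*} (G : SimpleGraph V) (x : V) (v : ZMod 5 → V)
    (a t : ZMod 5) (h : {i : ZMod 5 | G.Adj x (v i)} = {a, a + 2}) :
    {i : ZMod 5 | G.Adj x (v (1 * i + t))} = {a - t, a - t + 2} := by
  have hAdj : ∀ j : ZMod 5, G.Adj x (v j) ↔ (j = a ∨ j = a + 2) := by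
    intro j
    rw [show G.Adj x (v j) ↔ j ∈ {i : ZMod 5 | G.Adj x (v i)} from Iff.rfl, h]
    simp [Set.mem_insert_iff]
  ext i
  simp only [Set.mem_setOf_eq, hAdj, one_mul, Set.mem_insert_iff, Set.mem_singleton_iff]
  constructor
  · rintro (h1 | h1)
    · exact Or.inl (eq_sub_of_add_eq h1)
    · right; rw [eq_sub_of_add_eq h1]; ring
  · rintro (rfl | rfl)
    · left; ring
    · right; ring

private lemma patternA {V : Type*} (G : SimpleGraph V) (v : ZMod 5 → V) (x y z : V)
    (t : ZMod 5)
    (hx : {i : ZMod 5 | G.Adj x (v i)} = {t, t + 2})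
    (hy : {i : ZMod 5 | G.Adj y (v i)} = {t + 1, t + 1 + 2})
    (hz : {i : ZMod 5 | G.Adj z (v i)} = {t + 4, t + 4 + 2}) :
    {i : ZMod 5 | G.Adj x (v (1 * i + t))} = {0, 2} ∧
    {i : ZMod 5 | G.Adj y (v (1 * i + t))} = {1, 3} ∧
    {i : ZMod 5 | G.Adj z (v (1 * i + t))} = {1, 4} := by
  refine ⟨?_, ?_, ?_⟩
  · rw [nbhd_shift G x v t t hx]
    have h1 : t - t = (0 : ZMod 5) := by ring
    rw [h1]; norm_num
  · rw [nbhd_shift G y v (t + 1) t hy]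
    have h1 : t + 1 - t = (1 : ZMod 5) := by ring
    rw [h1]; norm_num
  · rw [nbhd_shift G z v (t + 4) t hz]
    have h1 : t + 4 - t = (4 : ZMod 5) := by ring
    have h2 : (4 : ZMod 5) + 2 = 1 := by decide
    rw [h1, h2, Set.pair_comm]

/-- Classification of minimal dominating stable sets of size 3 of an induced
5-cycle in a triangle-free graph, when every vertex of the set has at least
two neighbors on the cycle: up to rotation and reflection of the cycle, the
neighborhoods are `{v1,v3}, {v2,v4}, {v2,v5}` or `{v3,v5}, {v1,v4}, {v2,v4}`
(here indexed from 0, so `{0,2}, {1,3}, {1,4}` or `{2,4}, {0,3}, {1,3}`). -/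
theorem dominating_triple_classification {V : Type*} (G : SimpleGraph V)
    (htf : ∀ a b c : V, G.Adj a b → G.Adj b c → ¬ G.Adj a c)
    (v : ZMod 5 → V) (hinj : Function.Injective v)
    (hcyc : ∀ i j : ZMod 5, G.Adj (v i) (v j) ↔ (i = j + 1 ∨ j = i + 1))
    (S : Set V) (hcard : S.ncard = 3)
    (hstab : ∀ a ∈ S, ∀ b ∈ S, ¬ G.Adj a b)
    (hdisj : ∀ s ∈ S, ∀ i : ZMod 5, s ≠ v i)
    (hdom : ∀ i : ZMod 5, ∃ s ∈ S, G.Adj s (v i))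
    (hmin : ∀ T : Set V, T ⊂ S → ¬ ∀ i : ZMod 5, ∃ s ∈ T, G.Adj s (v i))
    (hnotone : ∀ s ∈ S, {i : ZMod 5 | G.Adj s (v i)}.ncard ≠ 1) :
    ∃ t : ZMod 5, ∃ ε : ZMod 5, (ε = 1 ∨ ε = -1) ∧
      ∃ x y z : V, S = {x, y, z} ∧ x ≠ y ∧ x ≠ z ∧ y ≠ z ∧
        (({i : ZMod 5 | G.Adj x (v (ε * i + t))} = {0, 2} ∧
          {i : ZMod 5 | G.Adj y (v (ε * i + t))} = {1, 3} ∧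
          {i : ZMod 5 | G.Adj z (v (ε * i + t))} = {1, 4}) ∨
         ({i : ZMod 5 | G.Adj x (v (ε * i + t))} = {2, 4} ∧
          {i : ZMod 5 | G.Adj y (v (ε * i + t))} = {0, 3} ∧
          {i : ZMod 5 | G.Adj z (v (ε * i + t))} = {1, 3})) := by
  -- Step 1: every s ∈ S has neighborhood {t, t+2} on the cycle
  have key : ∀ s ∈ S, ∃ t : ZMod 5, {i : ZMod 5 | G.Adj s (v i)} = {t, t + 2} := by
    intro s hs
    set N : Set (ZMod 5) := {i : ZMod 5 | G.Adj s (v i)} with hN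
    -- no three distinct elements
    have h3 : ∀ i ∈ N, ∀ j ∈ N, ∀ k ∈ N, i = j ∨ i = k ∨ j = k := by
      intro i hi j hj k hk
      by_contra hc
      push_neg at hc
      obtain ⟨hij, hik, hjk⟩ := hc
      rcases zmod5_three hij hik hjk with h | h | h
      · exact htf s (v i) (v j) hi ((hcyc i j).mpr h) hj
      · exact htf s (v i) (v k) hi ((hcyc i k).mpr h) hk
      · exact htf s (v j) (v k) hj ((hcyc j k).mpr h) hk
    -- nonempty by minimality
    have hne : N.Nonempty := by
      by_contra hne
      rw [Set.not_nonempty_iff_eq_empty] at hne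
      refine hmin (S \ {s}) (Set.sdiff_singleton_ssubset.mpr hs) ?_
      intro i
      obtain ⟨s', hs', hadj⟩ := hdom i
      refine ⟨s', ⟨hs', ?_⟩, hadj⟩
      simp only [Set.mem_singleton_iff]
      rintro rfl
      have : i ∈ N := hadj
      rw [hne] at this
      exact this
    obtain ⟨a, ha⟩ := hne
    -- a second element
    have hb : ∃ b ∈ N, b ≠ a := by
      by_contra hb
      push_neg at hb
      have hsing : N = {a} := Set.eq_singleton_iff_unique_mem.mpr ⟨ha, hb⟩
      exact hnotone s hs (by rw [← hN, hsing]; exact Set.ncard_singleton a)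
    obtain ⟨b, hbN, hba⟩ := hb
    have hNab : N = {a, b} := by
      ext k
      constructor
      · intro hk
        rcases h3 k hk a ha b hbN with h | h | h
        · exact Or.inl h
        · exact Or.inr h
        · exact absurd h.symm hba
      · rintro (rfl | rfl)
        · exact ha
        · exact hbN
    have hnadj : ¬ (a = b + 1 ∨ b = a + 1) := by
      intro h
      exact htf s (v a) (v b) ha ((hcyc a b).mpr h) hbN
    rcases zmod5_pair (fun h => hba h.symm) hnadj with h | h
    · exact ⟨a, by rw [hNab, ← h]⟩
    · exact ⟨b, by rw [hNab, ← h, Set.pair_comm]⟩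
  obtain ⟨p, q, r, hpq, hpr, hqr, rfl⟩ := Set.ncard_eq_three.mp hcard
  obtain ⟨ta, hNa⟩ := key p (by simp)
  obtain ⟨tb, hNb⟩ := key q (by simp)
  obtain ⟨tc, hNc⟩ := key r (by simp)
  have hcov : ∀ i : ZMod 5,
      i = ta ∨ i = ta + 2 ∨ i = tb ∨ i = tb + 2 ∨ i = tc ∨ i = tc + 2 := by
    intro i
    obtain ⟨s, hs, hadj⟩ := hdom i
    simp only [Set.mem_insert_iff, Set.mem_singleton_iff] at hs
    rcases hs with rfl | rfl | rfl
    · have : i ∈ ({ta, ta + 2} : Set (ZMod 5)) := hNa ▸ hadj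
      simp only [Set.mem_insert_iff, Set.mem_singleton_iff] at this
      tauto
    · have : i ∈ ({tb, tb + 2} : Set (ZMod 5)) := hNb ▸ hadj
      simp only [Set.mem_insert_iff, Set.mem_singleton_iff] at this
      tauto
    · have : i ∈ ({tc, tc + 2} : Set (ZMod 5)) := hNc ▸ hadj
      simp only [Set.mem_insert_iff, Set.mem_singleton_iff] at this
      tauto
  rcases zmod5_cover hcov with ⟨h1, h2⟩ | ⟨h1, h2⟩ | ⟨h1, h2⟩ | ⟨h1, h2⟩ | ⟨h1, h2⟩ | ⟨h1, h2⟩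
  · -- tb = ta+1, tc = ta+4 : x=p, y=q, z=r
    exact ⟨ta, 1, Or.inl rfl, p, q, r, rfl, hpq, hpr, hqr,
      Or.inl (patternA G v p q r ta hNa (h1 ▸ hNb) (h2 ▸ hNc))⟩
  · -- tc = ta+1, tb = ta+4 : x=p, y=r, z=q
    refine ⟨ta, 1, Or.inl rfl, p, r, q, ?_, hpr, hpq, hqr.symm,
      Or.inl (patternA G v p r q ta hNa (h1 ▸ hNc) (h2 ▸ hNb))⟩
    rw [Set.pair_comm q r]
  · -- ta = tb+1, tc = tb+4 : x=q, y=p, z=r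
    refine ⟨tb, 1, Or.inl rfl, q, p, r, ?_, hpq.symm, hqr, hpr,
      Or.inl (patternA G v q p r tb hNb (h1 ▸ hNa) (h2 ▸ hNc))⟩
    rw [Set.insert_comm]
  · -- tc = tb+1, ta = tb+4 : x=q, y=r, z=p
    refine ⟨tb, 1, Or.inl rfl, q, r, p, ?_, hqr, hpq.symm, hpr.symm,
      Or.inl (patternA G v q r p tb hNb (h1 ▸ hNc) (h2 ▸ hNa))⟩
    ext u; simp only [Set.mem_insert_iff, Set.mem_singleton_iff]; tauto
  · -- ta = tc+1, tb = tc+4 : x=r, y=p, z=q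
    refine ⟨tc, 1, Or.inl rfl, r, p, q, ?_, hpr.symm, hqr.symm, hpq,
      Or.inl (patternA G v r p q tc hNc (h1 ▸ hNa) (h2 ▸ hNb))⟩
    ext u; simp only [Set.mem_insert_iff, Set.mem_singleton_iff]; tauto
  · -- tb = tc+1, ta = tc+4 : x=r, y=q, z=p
    refine ⟨tc, 1, Or.inl rfl, r, q, p, ?_, hqr.symm, hpr.symm, hpq.symm,
      Or.inl (patternA G v r q p tc hNc (h1 ▸ hNb) (h2 ▸ hNa))⟩
    ext u; simp only [Set.mem_insert_iff, Set.mem_singleton_iff]; tauto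
end
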